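/- Let F_2 = ⟨a,b⟩, H = ⟨b, ababa⟩ ≤ F_2, and g = a. Then for every nonzero integer i, the commutator [(h_2 h_1)^i, x h_1], where h_1 = b and h_2 = ababa, lies in the ideal I_g and has degree 2; these elements are pairwise non-conjugate in H * ⟨x⟩ for distinct i. Consequently ρ_{g,2}(M) grows at least linearly in M. -/

import Mathlib

/-!
Send `H * ⟨x⟩` to the integral Heisenberg group by `h₁ ↦ 1`, `h₂ ↦ (1,0,0)`, `x ↦ (0,1,0)`.
The commutator `[(h₂h₁)^i, x h₁]` goes to the central element `(0,0,i)`, which therefore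
separates the conjugacy classes. The `b`-coordinate of the image of a word has the parity of its
number of `x`-letters, and a word without `x`-letters lands in `c = 0`; hence every conjugate of
`[(h₂h₁)^i, x h₁]` has at least two `x`-letters, while the commutator itself has at most two.
In `F₂` we have `h₂h₁ ↦ (ab)³` and `x h₁ ↦ ab`, which commute, so the commutators lie in `I_g`.
For `m ≥ 1` the commutator with `i = m` is spelled by the cyclically reduced word
`(h₂h₁)^m x (h₂⁻¹h₁⁻¹)^m x⁻¹` of length `4m + 2`, which gives the linear lower bound on `ρ_{g,2}`.
-/

/-- Number of occurrences of `x^{±1}` in a word over the basis `h₁,…,h_r,x` of `H * ⟨x⟩`. -/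
def xcount {r : ℕ} (w : List ((Fin r ⊕ Unit) × Bool)) : ℕ :=
  w.countP fun l => match l.1 with | Sum.inr _ => true | Sum.inl _ => false

/-- A word is cyclically reduced iff its double is a reduced word. -/
def CyclicallyReduced {r : ℕ} (w : List ((Fin r ⊕ Unit) × Bool)) : Prop :=
  FreeGroup.reduce (w ++ w) = w ++ w

/-- `rhoD φ d M` counts the cyclically reduced words of length at most `M` lying in
`I_g = ker φ` with degree `d`. -/
noncomputable def rhoD {n r : ℕ} (φ : FreeGroup (Fin r ⊕ Unit) →* FreeGroup (Fin n))
    (d M : ℕ) : ℕ :=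
  Set.ncard { w : List ((Fin r ⊕ Unit) × Bool) |
    w.length ≤ M ∧ CyclicallyReduced w ∧ xcount w = d ∧ FreeGroup.mk w ∈ MonoidHom.ker φ }

/-- The degree of an element of `H * ⟨x⟩`: the number of occurrences of `x^{±1}` in its
cyclic reduction, i.e. the minimum over all conjugates of the number of occurrences of
`x^{±1}` in the reduced word. -/
noncomputable def xdeg {r : ℕ} (w : FreeGroup (Fin r ⊕ Unit)) : ℕ :=
  sInf { c | ∃ u : FreeGroup (Fin r ⊕ Unit), c = xcount (FreeGroup.toWord (u * w * u⁻¹)) }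

/-- `a` and `b`: the generators of `F₂` (modelled as `FreeGroup (Fin 2)`). -/
noncomputable def aGen : FreeGroup (Fin 2) := FreeGroup.of 0
noncomputable def bGen : FreeGroup (Fin 2) := FreeGroup.of 1

/-- The evaluation map `H * ⟨x⟩ → F₂` for `H = ⟨b, ababa⟩` and `g = a`:
`h₁ ↦ b`, `h₂ ↦ ababa`, `x ↦ a`. -/
noncomputable def phi16 : FreeGroup (Fin 2 ⊕ Unit) →* FreeGroup (Fin 2) :=
  FreeGroup.lift (Sum.elim
    (fun i : Fin 2 => if i = 0 then bGen else aGen * bGen * aGen * bGen * aGen)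
    (fun _ => aGen))

open scoped commutatorElement in
/-- The degree-two equations `[(h₂h₁)^i, x h₁]`. -/
noncomputable def eqn16 (i : ℤ) : FreeGroup (Fin 2 ⊕ Unit) :=
  ⁅((FreeGroup.of (Sum.inl 1) : FreeGroup (Fin 2 ⊕ Unit)) * FreeGroup.of (Sum.inl 0)) ^ i,
    (FreeGroup.of (Sum.inr ()) : FreeGroup (Fin 2 ⊕ Unit)) * FreeGroup.of (Sum.inl 0)⁆

open FreeGroup
open scoped commutatorElement

section XCount

variable {r : ℕ}

@[simp] lemma xcount_nil : xcount ([] : List ((Fin r ⊕ Unit) × Bool)) = 0 := rfl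

@[simp] lemma xcount_cons_inl (i : Fin r) (b : Bool) (L : List ((Fin r ⊕ Unit) × Bool)) :
    xcount ((Sum.inl i, b) :: L) = xcount L := by
  simp [xcount]

@[simp] lemma xcount_cons_inr (u : Unit) (b : Bool) (L : List ((Fin r ⊕ Unit) × Bool)) :
    xcount ((Sum.inr u, b) :: L) = xcount L + 1 := by
  simp [xcount]

@[simp] lemma xcount_append (L₁ L₂ : List ((Fin r ⊕ Unit) × Bool)) :
    xcount (L₁ ++ L₂) = xcount L₁ + xcount L₂ :=
  List.countP_append ..

lemma xcount_invRev (L : List ((Fin r ⊕ Unit) × Bool)) : xcount (invRev L) = xcount L := by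
  simp only [xcount, invRev, List.countP_reverse, List.countP_map]
  rfl

lemma xcount_toWord_mul_le (g h : FreeGroup (Fin r ⊕ Unit)) :
    xcount (g * h).toWord ≤ xcount g.toWord + xcount h.toWord :=
  (toWord_mul_sublist g h).countP_le.trans_eq (xcount_append _ _)

lemma xcount_toWord_inv (g : FreeGroup (Fin r ⊕ Unit)) :
    xcount g⁻¹.toWord = xcount g.toWord := by
  rw [toWord_inv, xcount_invRev]

lemma xcount_toWord_commutatorElement_le (g h : FreeGroup (Fin r ⊕ Unit)) :
    xcount ⁅g, h⁆.toWord ≤ 2 * (xcount g.toWord + xcount h.toWord) := by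
  have := xcount_toWord_mul_le (g * h * g⁻¹) h⁻¹
  have := xcount_toWord_mul_le (g * h) g⁻¹
  have := xcount_toWord_mul_le g h
  rw [xcount_toWord_inv] at *
  rw [commutatorElement_def]
  omega

lemma xcount_toWord_map_inl (v : FreeGroup (Fin r)) :
    xcount (map Sum.inl v).toWord = 0 := by
  rw [← mk_toWord (x := v), map.mk, toWord_mk]
  exact Nat.eq_zero_of_le_zero (reduce.red.sublist.countP_le.trans_eq (by simp [List.countP_map]))

lemma xdeg_le_xcount_toWord (w : FreeGroup (Fin r ⊕ Unit)) : xdeg w ≤ xcount w.toWord :=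
  Nat.sInf_le ⟨1, by simp⟩

lemma le_xdeg {w : FreeGroup (Fin r ⊕ Unit)} {d : ℕ}
    (h : ∀ u, d ≤ xcount (u * w * u⁻¹).toWord) : d ≤ xdeg w :=
  le_csInf ⟨_, 1, rfl⟩ (by rintro _ ⟨u, rfl⟩; exact h u)

end XCount

/-- The integral Heisenberg group: `⟨a, b, c⟩` is the matrix `[[1, a, c], [0, 1, b], [0, 0, 1]]`. -/
@[ext] structure Heis where
  a : ℤ
  b : ℤ
  c : ℤ

namespace Heis

instance : Mul Heis := ⟨fun p q => ⟨p.a + q.a, p.b + q.b, p.c + q.c + p.a * q.b⟩⟩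
instance : One Heis := ⟨⟨0, 0, 0⟩⟩
instance : Inv Heis := ⟨fun p => ⟨-p.a, -p.b, p.a * p.b - p.c⟩⟩

@[simp] lemma mul_a (p q : Heis) : (p * q).a = p.a + q.a := rfl
@[simp] lemma mul_b (p q : Heis) : (p * q).b = p.b + q.b := rfl
@[simp] lemma mul_c (p q : Heis) : (p * q).c = p.c + q.c + p.a * q.b := rfl
@[simp] lemma one_def : (1 : Heis) = ⟨0, 0, 0⟩ := rfl
@[simp] lemma inv_def (p : Heis) : p⁻¹ = ⟨-p.a, -p.b, p.a * p.b - p.c⟩ := rfl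

instance : Group Heis where
  mul_assoc p q s := by ext <;> simp <;> ring
  one_mul p := by ext <;> simp
  mul_one p := by ext <;> simp
  inv_mul_cancel p := by ext <;> simp

lemma zpow_mk_zero_zero (a n : ℤ) : (⟨a, 0, 0⟩ : Heis) ^ n = ⟨n * a, 0, 0⟩ := by
  induction n using Int.induction_on with
  | zero => simp
  | succ n ih => rw [zpow_add_one, ih]; ext <;> simp; ring
  | pred n ih => rw [zpow_sub_one, ih]; ext <;> simp; ring

lemma conj_mk_zero_zero (u : Heis) (z : ℤ) : u * ⟨0, 0, z⟩ * u⁻¹ = ⟨0, 0, z⟩ := by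
  ext <;> simp; ring

end Heis

section HeisRep

variable {r : ℕ}

noncomputable def heisRep (f : Fin r → ℤ) : FreeGroup (Fin r ⊕ Unit) →* Heis :=
  FreeGroup.lift (Sum.elim (fun i => ⟨f i, 0, 0⟩) fun _ => ⟨0, 1, 0⟩)

lemma heisRep_mk_cons (f : Fin r → ℤ) (p : (Fin r ⊕ Unit) × Bool)
    (L : List ((Fin r ⊕ Unit) × Bool)) :
    heisRep f (mk (p :: L)) = heisRep f (mk [p]) * heisRep f (mk L) := by
  rw [← MonoidHom.map_mul, mul_mk]
  rfl

lemma heisRep_mk_inl (f : Fin r → ℤ) (i : Fin r) (s : Bool) :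
    heisRep f (mk [(Sum.inl i, s)]) = ⟨if s then f i else -f i, 0, 0⟩ := by
  cases s <;> simp [heisRep, lift_mk]

lemma heisRep_mk_inr (f : Fin r → ℤ) (u : Unit) (s : Bool) :
    heisRep f (mk [(Sum.inr u, s)]) = ⟨0, if s then 1 else -1, 0⟩ := by
  cases s <;> simp [heisRep, lift_mk]

lemma heisRep_mk_b_modEq (f : Fin r → ℤ) (L : List ((Fin r ⊕ Unit) × Bool)) :
    (heisRep f (mk L)).b ≡ xcount L [ZMOD 2] := by
  induction L with
  | nil => rfl
  | cons p L ih =>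
    obtain ⟨i | u, s⟩ := p
    · rw [heisRep_mk_cons, heisRep_mk_inl, xcount_cons_inl, Heis.mul_b, zero_add]
      exact ih
    · rw [heisRep_mk_cons, heisRep_mk_inr, xcount_cons_inr, Heis.mul_b]
      unfold Int.ModEq at ih ⊢
      cases s <;> simp only [Bool.false_eq_true, if_true, if_false] <;> omega

lemma heisRep_mk_of_xcount_eq_zero (f : Fin r → ℤ) {L : List ((Fin r ⊕ Unit) × Bool)}
    (h : xcount L = 0) : (heisRep f (mk L)).b = 0 ∧ (heisRep f (mk L)).c = 0 := by
  induction L with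
  | nil => exact ⟨rfl, rfl⟩
  | cons p L ih =>
    obtain ⟨i | u, s⟩ := p
    · obtain ⟨hb, hc⟩ := ih (by simpa using h)
      rw [heisRep_mk_cons, heisRep_mk_inl, Heis.mul_b, Heis.mul_c]
      simp [hb, hc]
    · simp at h

lemma two_le_xcount_of_heisRep (f : Fin r → ℤ) {L : List ((Fin r ⊕ Unit) × Bool)}
    (hb : (heisRep f (mk L)).b = 0) (hc : (heisRep f (mk L)).c ≠ 0) : 2 ≤ xcount L := by
  have hpar := heisRep_mk_b_modEq f L
  have hne : xcount L ≠ 0 := fun h => hc (heisRep_mk_of_xcount_eq_zero f h).2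
  rw [hb, Int.ModEq] at hpar
  omega

end HeisRep

lemma eqn16_mem_ker (i : ℤ) : eqn16 i ∈ MonoidHom.ker phi16 := by
  have hh : phi16 (of (Sum.inl 1) * of (Sum.inl 0)) = (aGen * bGen) ^ 3 := by
    simp [phi16, pow_succ, mul_assoc]
  have hx : phi16 (of (Sum.inr ()) * of (Sum.inl 0)) = aGen * bGen := by
    simp [phi16]
  rw [MonoidHom.mem_ker, eqn16, map_commutatorElement, commutatorElement_eq_one_iff_commute,
    map_zpow, hh, hx]
  exact ((Commute.refl _).pow_left 3).zpow_left i

lemma heisRep_eqn16 (i : ℤ) : heisRep ![0, 1] (eqn16 i) = ⟨0, 0, i⟩ := by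
  have h₁ : heisRep ![0, 1] (of (Sum.inl 0)) = 1 := rfl
  have h₂ : heisRep ![0, 1] (of (Sum.inl 1)) = ⟨1, 0, 0⟩ := rfl
  have hx : heisRep ![0, 1] (of (Sum.inr ())) = ⟨0, 1, 0⟩ := rfl
  rw [eqn16, map_commutatorElement, map_zpow, MonoidHom.map_mul, MonoidHom.map_mul, h₁, h₂, hx,
    mul_one, mul_one, Heis.zpow_mk_zero_zero]
  ext <;> simp [commutatorElement_def]

lemma xcount_toWord_eqn16_le (i : ℤ) : xcount (eqn16 i).toWord ≤ 2 := by
  have hpow : (of (Sum.inl 1) * of (Sum.inl 0) : FreeGroup (Fin 2 ⊕ Unit)) ^ i =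
      map Sum.inl ((of 1 * of 0 : FreeGroup (Fin 2)) ^ i) := by
    simp
  have hx := xcount_toWord_mul_le (of (Sum.inr ()) : FreeGroup (Fin 2 ⊕ Unit)) (of (Sum.inl 0))
  simp only [toWord_of, xcount_cons_inr, xcount_cons_inl, xcount_nil] at hx
  have := xcount_toWord_commutatorElement_le
    ((of (Sum.inl 1) * of (Sum.inl 0) : FreeGroup (Fin 2 ⊕ Unit)) ^ i)
    (of (Sum.inr ()) * of (Sum.inl 0))
  rw [hpow, xcount_toWord_map_inl] at this
  rw [eqn16, hpow]
  omega

lemma two_le_xcount_toWord_conj_eqn16 {i : ℤ} (hi : i ≠ 0) (u : FreeGroup (Fin 2 ⊕ Unit)) :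
    2 ≤ xcount (u * eqn16 i * u⁻¹).toWord := by
  have h : heisRep ![0, 1] (mk (u * eqn16 i * u⁻¹).toWord) = ⟨0, 0, i⟩ := by
    rw [mk_toWord, MonoidHom.map_mul, MonoidHom.map_mul, MonoidHom.map_inv, heisRep_eqn16,
      Heis.conj_mk_zero_zero]
  exact two_le_xcount_of_heisRep _ (by rw [h]) (by rw [h]; exact hi)

lemma xdeg_eqn16 {i : ℤ} (hi : i ≠ 0) : xdeg (eqn16 i) = 2 :=
  le_antisymm ((xdeg_le_xcount_toWord _).trans (xcount_toWord_eqn16_le i))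
    (le_xdeg (two_le_xcount_toWord_conj_eqn16 hi))

lemma eqn16_isConj_iff (i j : ℤ) : IsConj (eqn16 i) (eqn16 j) ↔ i = j := by
  refine ⟨fun h => ?_, fun h => h ▸ IsConj.refl _⟩
  obtain ⟨u, hu⟩ := isConj_iff.mp ((heisRep ![0, 1]).map_isConj h)
  rw [heisRep_eqn16, heisRep_eqn16, Heis.conj_mk_zero_zero] at hu
  exact congrArg Heis.c hu

lemma commutatorElement_mul_pow_mul_right {G : Type*} [Group G] (a b c : G) (m : ℕ) :
    ⁅(a * b) ^ m, c * b⁆ = (a * b) ^ m * c * (a⁻¹ * b⁻¹) ^ m * c⁻¹ := by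
  have h : (a⁻¹ * b⁻¹) ^ m = b * ((a * b) ^ m)⁻¹ * b⁻¹ := by
    rw [← inv_pow, ← conj_pow]
    group
  rw [h, commutatorElement_def]
  group

lemma cyclicallyReduced_of_isCyclicallyReduced {r : ℕ} {L : List ((Fin r ⊕ Unit) × Bool)}
    (h : IsCyclicallyReduced L) : CyclicallyReduced L := by
  simpa [CyclicallyReduced] using (h.flatten_replicate 2).isReduced.reduce_eq

def eqnWord (m : ℕ) : List ((Fin 2 ⊕ Unit) × Bool) :=
  (List.replicate m [(.inl 1, true), (.inl 0, true)]).flatten ++ [(.inr (), true)] ++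
    (List.replicate m [(.inl 1, false), (.inl 0, false)]).flatten ++ [(.inr (), false)]

lemma length_eqnWord (m : ℕ) : (eqnWord m).length = 4 * m + 2 := by
  simp +arith [eqnWord]

lemma xcount_eqnWord (m : ℕ) : xcount (eqnWord m) = 2 := by
  simp [eqnWord, xcount]

lemma mk_eqnWord (m : ℕ) : mk (eqnWord m) = eqn16 m := by
  rw [eqnWord, ← mul_mk, ← mul_mk, ← mul_mk, ← pow_mk, ← pow_mk, eqn16, zpow_natCast,
    commutatorElement_mul_pow_mul_right]
  rfl

lemma isCyclicallyReduced_eqnWord {m : ℕ} (hm : m ≠ 0) : IsCyclicallyReduced (eqnWord m) := by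
  have htail : FreeGroup.IsReduced (([(.inl 1, true), (.inl 0, true), (.inr (), true)] :
      List ((Fin 2 ⊕ Unit) × Bool)) ++
      (List.replicate m [(.inl 1, false), (.inl 0, false)]).flatten ++ [(.inr (), false)]) :=
    IsReduced.append_flatten_replicate_append
      (by simp [IsCyclicallyReduced, FreeGroup.IsReduced]) (by simp [FreeGroup.IsReduced]) hm
  have hfull := IsReduced.append_flatten_replicate_append (L₁ := [])
    (L₂ := ([(.inl 1, true), (.inl 0, true)] : List ((Fin 2 ⊕ Unit) × Bool)))
    (L₃ := (.inr (), true) ::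
      ((List.replicate m [(.inl 1, false), (.inl 0, false)]).flatten ++ [(.inr (), false)]))
    (by simp [IsCyclicallyReduced, FreeGroup.IsReduced]) (by simpa using htail) hm
  refine ⟨by simpa [eqnWord] using hfull, ?_⟩
  obtain ⟨m, rfl⟩ := Nat.exists_eq_succ_of_ne_zero hm
  have hhead : (eqnWord (m + 1)).head? = some (.inl 1, true) := by simp [eqnWord]
  have hlast : (eqnWord (m + 1)).getLast? = some (.inr (), false) := by
    rw [eqnWord, List.getLast?_concat]
  simp [hhead, hlast]

lemma le_rhoD (M : ℕ) : (M - 2) / 4 ≤ rhoD phi16 2 M := by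
  have hinj : Set.InjOn eqnWord (Set.Icc 1 ((M - 2) / 4)) := fun m _ n _ h => by
    have := congrArg List.length h
    rw [length_eqnWord, length_eqnWord] at this
    omega
  refine le_of_eq_of_le (by simp) (Set.ncard_le_ncard_of_injOn eqnWord ?_ hinj
    ((List.finite_length_le _ M).subset fun w hw => hw.1))
  rintro m ⟨hm1, hm2⟩
  refine ⟨?_, cyclicallyReduced_of_isCyclicallyReduced (isCyclicallyReduced_eqnWord (by omega)),
    xcount_eqnWord m, ?_⟩
  · rw [length_eqnWord]
    omega
  · rw [mk_eqnWord]
    exact eqn16_mem_ker m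

/-- For `F₂ = ⟨a,b⟩`, `H = ⟨b, ababa⟩` and `g = a`: each commutator `[(h₂h₁)^i, x h₁]`
(`i ≠ 0`) lies in the ideal `I_g` and has degree `2`; they are pairwise non-conjugate in
`H * ⟨x⟩`; consequently `ρ_{g,2}(M)` grows at least linearly in `M`. -/
theorem stmt16 :
    (∀ i : ℤ, i ≠ 0 → eqn16 i ∈ MonoidHom.ker phi16 ∧ xdeg (eqn16 i) = 2) ∧
    (∀ i j : ℤ, i ≠ 0 → j ≠ 0 → i ≠ j → ¬ IsConj (eqn16 i) (eqn16 j)) ∧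
    (∃ c : ℝ, 0 < c ∧ ∃ M₀ : ℕ, ∀ M : ℕ, M₀ ≤ M →
      c * (M : ℝ) ≤ (rhoD phi16 2 M : ℝ)) := by
  refine ⟨fun i hi => ⟨eqn16_mem_ker i, xdeg_eqn16 hi⟩,
    fun i j _ _ hij => (eqn16_isConj_iff i j).not.mpr hij, 1 / 8, by norm_num, 10, fun M hM => ?_⟩
  have h : M ≤ 8 * rhoD phi16 2 M := (by omega : M ≤ 8 * ((M - 2) / 4)).trans (by
    gcongr; exact le_rhoD M)
  have : (M : ℝ) ≤ 8 * (rhoD phi16 2 M : ℝ) := by exact_mod_cast h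
  linarith
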